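/- arXiv:1909.10623 — 5 statements merged into one kernel-verified Lean document; each statement's English description precedes it below -/
import Mathlib

section
/- Let φ : S¹ → ℝ² be a continuous injective map and γ = range(φ) the corresponding Jordan curve. Then every connected component of the complement ℝ² ∖ γ has topological frontier (boundary) equal to γ. -/
/-!
Let `C` be the component of `x` in the complement of the curve `γ`. Its frontier lies in `γ`.
Conversely, if a point `p ∈ γ` had a neighbourhood `V` missing `C`, remove from `γ` a small
open sub-arc around `p` inside `V`; the rest is an arc `A` containing the frontier of `C`, so `C`
is still a component of `ℂ \ A`. But the complement of an arc is connected (Eilenberg): on an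
arc, which is simply connected, every `z ↦ z - c` with `c ∉ A` has a continuous logarithm,
whereas if `a` lies in a bounded component of `ℂ \ A` not containing `b`, then
`z ↦ (z - a) / (z - b)` has none on `A` (Borsuk), as it would give a nonvanishing extension of
`z - a` to the plane, hence a logarithm of `z - a` on a large circle around `a`. So `p` and `x`
lie in the same component `C`, contradicting `p ∈ γ`.
-/

open Bornology Complex Function Metric Set Topology
open scoped Real

def HasContinuousLog {X : Type*} [TopologicalSpace X] (f : X → ℂ) : Prop :=
  ∃ g : X → ℂ, Continuous g ∧ ∀ x, exp (g x) = f x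

section ContinuousLog

variable {X : Type*} [TopologicalSpace X]

theorem HasContinuousLog.div {f g : X → ℂ} (hf : HasContinuousLog f)
    (hg : HasContinuousLog g) : HasContinuousLog (f / g) := by
  obtain ⟨F, hF, hF_exp⟩ := hf
  obtain ⟨G, hG, hG_exp⟩ := hg
  exact ⟨F - G, hF.sub hG, fun x ↦ by simp [exp_sub, hF_exp, hG_exp]⟩

theorem hasContinuousLog_of_simplyConnectedSpace [SimplyConnectedSpace X]
    [LocallyPathConnectedSpace X] {f : X → ℂ} (hf : Continuous f) (hf₀ : ∀ x, f x ≠ 0) :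
    HasContinuousLog f := by
  obtain ⟨x₀⟩ := (inferInstance : Nonempty X)
  obtain ⟨g, ⟨-, hg⟩, -⟩ := isCoveringMapOn_exp.existsUnique_continuousMap_lifts ⟨f, hf⟩
    (a₀ := x₀) (exp_log (hf₀ x₀)) hf₀
  exact ⟨g, g.continuous, congrFun hg⟩

theorem hasContinuousLog_range_Icc [T2Space X] {u v : ℝ} (huv : u ≤ v) {k : Icc u v → X}
    (hk : Continuous k) (hk_inj : Injective k) {f : range k → ℂ} (hf : Continuous f)
    (hf₀ : ∀ z, f z ≠ 0) : HasContinuousLog f := by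
  have := (convex_Icc u v).contractibleSpace (nonempty_Icc.mpr huv)
  have := (convex_Icc u v).locallyPathConnectedSpace
  let e := (hk.isClosedEmbedding hk_inj).isEmbedding.toHomeomorph
  obtain ⟨g, hg, hg_exp⟩ :=
    hasContinuousLog_of_simplyConnectedSpace (hf.comp e.continuous) fun t ↦ hf₀ (e t)
  exact ⟨g ∘ e.symm, hg.comp e.symm.continuous, fun z ↦ by simp [hg_exp]⟩

end ContinuousLog

theorem not_hasContinuousLog_coe_sphere {R : ℝ} (hR : 0 < R) :
    ¬ HasContinuousLog fun z : sphere (0 : ℂ) R ↦ (z : ℂ) := by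
  rintro ⟨G, hG, hG_exp⟩
  let c : ℝ → sphere (0 : ℂ) R := fun t ↦
    ⟨R * exp (t * I), by simp [norm_exp_ofReal_mul_I, abs_of_pos hR]⟩
  have hc_period : c (2 * π) = c 0 := by
    ext1
    simp [c]
  -- `G ∘ c` is a continuous logarithm of `t ↦ R e^{it}`, so it differs from `log R + it` by a
  -- continuous function with values in the discrete set `2πiℤ`.
  let η : ℝ → ℂ := fun t ↦ G (c t) - Real.log R - t * I
  have hη_mem : ∀ t, η t ∈ AddSubgroup.zmultiples (2 * π * I) := by
    intro t
    obtain ⟨n, hn⟩ := exp_eq_one_iff.mp <| show exp (η t) = 1 by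
      have hR' : (R : ℂ) ≠ 0 := by exact_mod_cast hR.ne'
      simp only [η, c, exp_sub, hG_exp, ofReal_log hR.le, exp_log hR']
      field_simp
    exact ⟨n, by simp [hn]⟩
  have hη_const : η (2 * π) = η 0 :=
    isPreconnected_univ.constant_of_mapsTo
      (isDiscrete_iff_discreteTopology.mpr (NormedSpace.discreteTopology_zmultiples _))
      (by fun_prop : Continuous η).continuousOn (fun t _ ↦ hη_mem t) (mem_univ _) (mem_univ _)
  simp only [η, hc_period] at hη_const
  norm_num [Real.pi_ne_zero, I_ne_zero] at hη_const

theorem not_hasContinuousLog_sub_sphere {R : ℝ} {a : ℂ} (ha : ‖a‖ < R) :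
    ¬ HasContinuousLog fun z : sphere (0 : ℂ) R ↦ (z : ℂ) - a := by
  rintro ⟨G, hG, hG_exp⟩
  have hR : 0 < R := (norm_nonneg a).trans_lt ha
  have hz₀ : ∀ z : sphere (0 : ℂ) R, (z : ℂ) ≠ 0 := fun z ↦ ne_zero_of_mem_sphere hR.ne' z
  have hslit : ∀ z : sphere (0 : ℂ) R, 1 + -a / z ∈ slitPlane := fun z ↦
    mem_slitPlane_of_norm_lt_one <| by
      rwa [neg_div, norm_neg, norm_div, norm_eq_of_mem_sphere z, div_lt_one hR]
  refine not_hasContinuousLog_coe_sphere hR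
    ⟨fun z ↦ G z - log (1 + -a / z), hG.sub ?_, fun z ↦ ?_⟩
  · exact (continuous_const.add (continuous_const.div continuous_subtype_val hz₀)).clog hslit
  · rw [exp_sub, hG_exp, exp_log (slitPlane_ne_zero (hslit z)),
      div_eq_iff (slitPlane_ne_zero (hslit z))]
    field_simp [hz₀ z]
    ring

section Components

variable {X : Type*} [TopologicalSpace X] [LocallyConnectedSpace X]

theorem frontier_connectedComponentIn_subset_compl {U : Set X} (hU : IsOpen U) (x : X) :
    frontier (connectedComponentIn U x) ⊆ Uᶜ := by
  intro y hy hyU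
  obtain ⟨z, hzy, hzx⟩ := mem_closure_iff.mp hy.1 _ hU.connectedComponentIn
    (mem_connectedComponentIn hyU)
  rw [hU.connectedComponentIn.frontier_eq, connectedComponentIn_eq hzx,
    ← connectedComponentIn_eq hzy] at hy
  exact hy.2 (mem_connectedComponentIn hyU)

theorem connectedComponentIn_compl_eq_of_frontier_subset {Γ A : Set X} (hΓ : IsClosed Γ)
    (hAΓ : A ⊆ Γ) {x : X} (hx : x ∉ Γ) (hfr : frontier (connectedComponentIn Γᶜ x) ⊆ A) :
    connectedComponentIn Aᶜ x = connectedComponentIn Γᶜ x := by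
  set C := connectedComponentIn Γᶜ x
  have hC : IsOpen C := hΓ.isOpen_compl.connectedComponentIn
  refine Subset.antisymm ?_ (connectedComponentIn_mono x (compl_subset_compl.mpr hAΓ))
  -- `C` is clopen in `Aᶜ`, since its frontier lies in `A`
  refine isPreconnected_connectedComponentIn.subset_left_of_subset_union hC
    isClosed_closure.isOpen_compl (disjoint_compl_right.mono_right
      (compl_subset_compl.mpr subset_closure)) (fun z hz ↦ ?_)
    ⟨x, mem_connectedComponentIn fun h ↦ hx (hAΓ h), mem_connectedComponentIn hx⟩
  refine (em (z ∈ C)).imp id fun hzC hz_cl ↦ connectedComponentIn_subset _ _ hz (hfr ?_)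
  rw [hC.frontier_eq]
  exact ⟨hz_cl, hzC⟩

end Components

section UnboundedComponents

variable {E : Type*} [NormedAddCommGroup E] [NormedSpace ℝ E]

theorem isPreconnected_compl_closedBall (hE : 1 < Module.rank ℝ E) {r : ℝ} (hr : 0 ≤ r) :
    IsPreconnected (closedBall (0 : E) r)ᶜ := by
  have : (closedBall (0 : E) r)ᶜ = (fun p : ℝ × E ↦ p.1 • p.2) '' Ioi r ×ˢ sphere 0 1 := by
    ext w
    simp only [mem_compl_iff, mem_closedBall_zero_iff, not_le, mem_image, mem_prod, mem_Ioi,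
      mem_sphere_zero_iff_norm, Prod.exists]
    constructor
    · intro hw
      have hw₀ : ‖w‖ ≠ 0 := (hr.trans_lt hw).ne'
      exact ⟨‖w‖, ‖w‖⁻¹ • w, ⟨hw, by simp [norm_smul, hw₀]⟩, by simp [smul_smul, hw₀]⟩
    · rintro ⟨t, v, ⟨ht, hv⟩, rfl⟩
      rwa [norm_smul, hv, mul_one, Real.norm_of_nonneg (hr.trans ht.le)]
  rw [this]
  exact (isPreconnected_Ioi.prod (isConnected_sphere hE 0 zero_le_one).isPreconnected).image _
    (by fun_prop)

theorem compl_closedBall_subset_connectedComponentIn (hE : 1 < Module.rank ℝ E) {A : Set E}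
    {r : ℝ} (hr : 0 ≤ r) (hA : A ⊆ closedBall 0 r) {a : E}
    (ha : ¬ IsBounded (connectedComponentIn Aᶜ a)) :
    (closedBall 0 r)ᶜ ⊆ connectedComponentIn Aᶜ a := by
  obtain ⟨z, hza, hz⟩ := not_subset.mp (mt isBounded_closedBall.subset ha)
  rw [connectedComponentIn_eq hza]
  exact (isPreconnected_compl_closedBall hE hr).subset_connectedComponentIn hz
    (compl_subset_compl.mpr hA)

theorem connectedComponentIn_compl_eq_of_not_isBounded (hE : 1 < Module.rank ℝ E) {A : Set E}
    (hA : IsBounded A) {a b : E} (ha : ¬ IsBounded (connectedComponentIn Aᶜ a))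
    (hb : ¬ IsBounded (connectedComponentIn Aᶜ b)) :
    connectedComponentIn Aᶜ a = connectedComponentIn Aᶜ b := by
  obtain ⟨r, hr, hAr⟩ := hA.subset_closedBall_lt 0 0
  obtain ⟨z, hza, hz⟩ := not_subset.mp (mt isBounded_closedBall.subset ha)
  rw [connectedComponentIn_eq hza, connectedComponentIn_eq
    (compl_closedBall_subset_connectedComponentIn hE hr.le hAr hb hz)]

end UnboundedComponents

/-- Borsuk's separation criterion. -/
theorem not_hasContinuousLog_sub_div_sub {A : Set ℂ} (hA : IsCompact A) {a b : ℂ}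
    (haA : a ∉ A) (hbA : b ∉ A) (ha : IsBounded (connectedComponentIn Aᶜ a))
    (hb : b ∉ connectedComponentIn Aᶜ a) :
    ¬ HasContinuousLog fun z : A ↦ ((z : ℂ) - a) / (z - b) := by
  rintro ⟨l, hl, hl_exp⟩
  classical
  set C := connectedComponentIn Aᶜ a
  have hfr : frontier C ⊆ A := by
    simpa using frontier_connectedComponentIn_subset_compl hA.isClosed.isOpen_compl a
  have hb_cl : b ∉ closure C := by
    rw [closure_eq_self_union_frontier]
    exact fun h ↦ h.elim hb fun h ↦ hbA (hfr h)
  obtain ⟨L, hL⟩ := ContinuousMap.exists_restrict_eq hA.isClosed ⟨l, hl⟩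
  have hLA : ∀ z : A, L z = l z := fun z ↦ DFunLike.congr_fun hL z
  -- On `A`, `(z - b) e^{L z} = z - a`, so `F` is continuous; it equals `z - a` outside the
  -- bounded set `closure C`.
  let F : ℂ → ℂ := (closure C).piecewise (fun z ↦ (z - b) * exp (L z)) (fun z ↦ z - a)
  have hF : Continuous F := by
    refine Continuous.piecewise (fun z hz ↦ ?_) (by fun_prop) (by fun_prop)
    have hzA : z ∈ A := hfr (frontier_closure_subset hz)
    have hzb : z - b ≠ 0 := sub_ne_zero.mpr fun h ↦ hbA (h ▸ hzA)
    rw [hLA ⟨z, hzA⟩, hl_exp, mul_div_cancel₀ _ hzb]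
  have hF₀ : ∀ z, F z ≠ 0 := by
    intro z
    by_cases hz : z ∈ closure C
    · simp only [F, piecewise_eq_of_mem _ _ _ hz]
      exact mul_ne_zero (sub_ne_zero.mpr fun h ↦ hb_cl (h ▸ hz)) (exp_ne_zero _)
    · simp only [F, piecewise_eq_of_notMem _ _ _ hz]
      exact sub_ne_zero.mpr fun h ↦ hz (h ▸ subset_closure (mem_connectedComponentIn haA))
  obtain ⟨G, hG, hG_exp⟩ := hasContinuousLog_of_simplyConnectedSpace hF hF₀
  obtain ⟨R, haR, hCR⟩ := ha.closure.subset_ball_lt ‖a‖ 0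
  refine not_hasContinuousLog_sub_sphere haR ⟨G ∘ (↑), hG.comp continuous_subtype_val, ?_⟩
  intro z
  have hz : (z : ℂ) ∉ closure C := fun h ↦
    (mem_ball_zero_iff.mp (hCR h)).ne (norm_eq_of_mem_sphere z)
  simp [hG_exp, F, piecewise_eq_of_notMem _ _ _ hz]

/-- Eilenberg's criterion. -/
theorem connectedComponentIn_compl_eq_of_hasContinuousLog {A : Set ℂ} (hA : IsCompact A)
    {a b : ℂ} (haA : a ∉ A) (hbA : b ∉ A) (ha : HasContinuousLog fun z : A ↦ (z : ℂ) - a)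
    (hb : HasContinuousLog fun z : A ↦ (z : ℂ) - b) :
    connectedComponentIn Aᶜ a = connectedComponentIn Aᶜ b := by
  by_contra hne
  by_cases hCa : IsBounded (connectedComponentIn Aᶜ a)
  · exact not_hasContinuousLog_sub_div_sub hA haA hbA hCa
      (fun h ↦ hne (connectedComponentIn_eq h)) (ha.div hb)
  by_cases hCb : IsBounded (connectedComponentIn Aᶜ b)
  · exact not_hasContinuousLog_sub_div_sub hA hbA haA hCb
      (fun h ↦ hne (connectedComponentIn_eq h).symm) (hb.div ha)
  exact hne (connectedComponentIn_compl_eq_of_not_isBounded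
    (by rw [Complex.rank_real_complex]; norm_num) hA.isBounded hCa hCb)

namespace Circle

theorem exists_compl_image_exp_Icc_subset {V : Set Circle} (hV : V ∈ 𝓝 1) :
    ∃ r, 0 < r ∧ r ≤ π ∧ (exp '' Icc r (2 * π - r))ᶜ ⊆ V := by
  obtain ⟨ε, hε, hεV⟩ := Metric.mem_nhds_iff.mp <|
    exp.continuous.continuousAt.preimage_mem_nhds (exp_zero ▸ hV : V ∈ 𝓝 (exp 0))
  refine ⟨min ε π, lt_min hε Real.pi_pos, min_le_right _ _, fun w hw ↦ ?_⟩
  have h₁ := neg_pi_lt_arg (w : ℂ)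
  have h₂ := arg_le_pi (w : ℂ)
  have h₃ := min_le_left ε π
  have h₄ := min_le_right ε π
  rcases lt_or_ge |arg w| (min ε π) with hsmall | hlarge
  · rw [← exp_arg w]
    exact hεV (by rw [mem_ball, Real.dist_eq, sub_zero]; linarith)
  · refine absurd ?_ hw
    rcases le_or_gt 0 (arg w) with hpos | hneg
    · rw [abs_of_nonneg hpos] at hlarge
      exact ⟨arg w, ⟨hlarge, by linarith⟩, exp_arg w⟩
    · rw [abs_of_neg hneg] at hlarge
      exact ⟨arg w + 2 * π, ⟨by linarith, by linarith⟩, by rw [exp_add_two_pi, exp_arg]⟩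

theorem one_notMem_image_exp_Icc {r : ℝ} (hr : 0 < r) : 1 ∉ exp '' Icc r (2 * π - r) := by
  rintro ⟨t, ht, h⟩
  rw [← exp_zero] at h
  have := exp_injOn_Ico (le_of_eq (by ring)) ⟨by linarith [ht.1], by linarith [ht.2]⟩
    ⟨le_rfl, Real.two_pi_pos⟩ h
  linarith [ht.1]

end Circle

theorem apply_one_mem_closure_connectedComponentIn_compl_range {ψ : Circle → ℂ}
    (hψ : Continuous ψ) (hψ_inj : Injective ψ) {x : ℂ} (hx : x ∉ range ψ) :
    ψ 1 ∈ closure (connectedComponentIn (range ψ)ᶜ x) := by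
  set C := connectedComponentIn (range ψ)ᶜ x
  by_contra hp
  obtain ⟨r, hr, hrπ, hV⟩ := Circle.exists_compl_image_exp_Icc_subset
    (hψ.continuousAt.preimage_mem_nhds (isClosed_closure.isOpen_compl.mem_nhds hp))
  -- `A` is the curve with a small open arc around `ψ 1` removed.
  let k : Icc r (2 * π - r) → ℂ := fun t ↦ ψ (Circle.exp t)
  have hk : Continuous k := by fun_prop
  have hk_inj : Injective k := fun s t h ↦ Subtype.ext <|
    Circle.exp_injOn_Icc (by linarith) s.2 t.2 (hψ_inj h)
  set A := range k
  have hA : IsCompact A := isCompact_range hk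
  have hAψ : A ⊆ range ψ := range_comp_subset_range _ _
  have hpA : ψ 1 ∉ A := by
    rintro ⟨t, ht⟩
    exact Circle.one_notMem_image_exp_Icc hr ⟨t, t.2, hψ_inj ht⟩
  have hxA : x ∉ A := fun h ↦ hx (hAψ h)
  have hfr : frontier C ⊆ A := by
    intro z hz
    obtain ⟨w, rfl⟩ := compl_compl (range ψ) ▸
      frontier_connectedComponentIn_subset_compl (isCompact_range hψ).isClosed.isOpen_compl x hz
    by_cases hw : w ∈ Circle.exp '' Icc r (2 * π - r)
    · obtain ⟨t, ht, rfl⟩ := hw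
      exact ⟨⟨t, ht⟩, rfl⟩
    · exact absurd (frontier_subset_closure hz) (hV hw)
  have hlog : ∀ c ∉ A, HasContinuousLog fun z : A ↦ (z : ℂ) - c := fun c hc ↦
    hasContinuousLog_range_Icc (by linarith) hk hk_inj (by fun_prop)
      fun z ↦ sub_ne_zero.mpr fun h ↦ hc (h ▸ z.2)
  have hCA : connectedComponentIn Aᶜ x = C :=
    connectedComponentIn_compl_eq_of_frontier_subset (isCompact_range hψ).isClosed hAψ hx hfr
  rw [← hCA, connectedComponentIn_compl_eq_of_hasContinuousLog hA hxA hpA (hlog x hxA)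
    (hlog _ hpA)] at hp
  exact hp (subset_closure (mem_connectedComponentIn hpA))

theorem frontier_connectedComponentIn_compl_range {ψ : Circle → ℂ} (hψ : Continuous ψ)
    (hψ_inj : Injective ψ) {x : ℂ} (hx : x ∉ range ψ) :
    frontier (connectedComponentIn (range ψ)ᶜ x) = range ψ := by
  have hU : IsOpen (range ψ)ᶜ := (isCompact_range hψ).isClosed.isOpen_compl
  refine (compl_compl (range ψ) ▸ frontier_connectedComponentIn_subset_compl hU x).antisymm ?_
  rintro _ ⟨a, rfl⟩
  have hrot : range (ψ ∘ (a * ·)) = range ψ := (mul_left_surjective a).range_comp ψ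
  have ha := apply_one_mem_closure_connectedComponentIn_compl_range
    (hψ.comp (continuous_const_mul a)) (hψ_inj.comp (mul_right_injective a)) (hrot ▸ hx)
  rw [hrot, comp_apply, mul_one] at ha
  rw [hU.connectedComponentIn.frontier_eq]
  exact ⟨ha, fun h ↦ connectedComponentIn_subset _ _ h ⟨a, rfl⟩⟩

/-- Every connected component of the complement of a Jordan curve `γ ⊆ ℝ²`
has topological frontier equal to `γ`. -/
theorem jordan_curve_frontier_of_components
    (φ : (Metric.sphere (0 : EuclideanSpace ℝ (Fin 2)) 1 : Set (EuclideanSpace ℝ (Fin 2))) →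
        EuclideanSpace ℝ (Fin 2))
    (hφc : Continuous φ) (hφi : Function.Injective φ)
    (γ : Set (EuclideanSpace ℝ (Fin 2))) (hγ : γ = Set.range φ) :
    ∀ x ∈ γᶜ, frontier (connectedComponentIn γᶜ x) = γ := by
  intro x hx
  let h : EuclideanSpace ℝ (Fin 2) ≃ₜ ℂ := Complex.orthonormalBasisOneI.repr.symm.toHomeomorph
  let j : Circle ≃ₜ sphere (0 : EuclideanSpace ℝ (Fin 2)) 1 :=
    h.symm.subtype fun z ↦ by simp [h, Submonoid.unitSphere]
  have hψ : range (h ∘ φ ∘ j) = h '' γ := by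
    rw [range_comp, j.surjective.range_comp, hγ]
  have := frontier_connectedComponentIn_compl_range
    (h.continuous.comp (hφc.comp j.continuous)) (h.injective.comp (hφi.comp j.injective))
    (hψ ▸ h.image_compl γ ▸ mem_image_of_mem h hx)
  rw [hψ, ← h.image_compl, ← h.image_connectedComponentIn hx, ← h.image_frontier] at this
  exact h.injective.image_injective this
end

section
/- Let γ₁ and γ₂ be disjoint Jordan curves in ℝ², let C₁ be a bounded connected component of ℝ² ∖ γ₁ and let C₂ be a bounded connected component of ℝ² ∖ γ₂. Then exactly one of the following holds: C₁ ⊆ C₂, or C₂ ⊆ C₁, or C₁ ∩ C₂ = ∅. -/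
open Set Bornology Metric

private lemma aux_mem_of_closure {F : Set (EuclideanSpace ℝ (Fin 2))} (hF : IsOpen F)
    {x z : EuclideanSpace ℝ (Fin 2)} (hz : z ∈ F)
    (hcl : z ∈ closure (connectedComponentIn F x)) : z ∈ connectedComponentIn F x := by
  have hnhds : connectedComponentIn F z ∈ nhds z := connectedComponentIn_mem_nhds (hF.mem_nhds hz)
  rcases mem_closure_iff_nhds.1 hcl _ hnhds with ⟨y, hy₁, hy₂⟩
  have e : connectedComponentIn F z = connectedComponentIn F x :=
    (connectedComponentIn_eq hy₁).trans (connectedComponentIn_eq hy₂).symm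
  rw [← e]
  exact mem_connectedComponentIn hz

private lemma aux_closure_subset {F : Set (EuclideanSpace ℝ (Fin 2))} (hF : IsOpen F)
    (x : EuclideanSpace ℝ (Fin 2)) :
    closure (connectedComponentIn F x) ⊆ connectedComponentIn F x ∪ Fᶜ := by
  intro z hz
  by_cases hzF : z ∈ F
  · exact Or.inl (aux_mem_of_closure hF hzF hz)
  · exact Or.inr hzF

/-- complement of a connected component of the complement of a compact connected
nonempty set is preconnected -/
private lemma aux_compl_preconnected {γ : Set (EuclideanSpace ℝ (Fin 2))}
    (hγcl : IsClosed γ) (hγpc : IsPreconnected γ) (hγne : γ.Nonempty)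
    (x : EuclideanSpace ℝ (Fin 2)) :
    IsPreconnected (connectedComponentIn γᶜ x)ᶜ := by
  have hF : IsOpen γᶜ := hγcl.isOpen_compl
  set T : EuclideanSpace ℝ (Fin 2) → Set (EuclideanSpace ℝ (Fin 2)) :=
    fun z => γ ∪ closure (connectedComponentIn γᶜ z) with hT
  obtain ⟨p, hp⟩ := hγne
  -- each T z for z ∈ (connectedComponentIn γᶜ x)ᶜ is contained in (connectedComponentIn γᶜ x)ᶜ
  have hTsub : ∀ z ∈ (connectedComponentIn γᶜ x)ᶜ, T z ⊆ (connectedComponentIn γᶜ x)ᶜ := by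
    intro z hzC w hw
    rcases hw with hw | hw
    · intro hwC
      exact (connectedComponentIn_subset γᶜ x hwC) hw
    · rcases aux_closure_subset hF z hw with hw' | hw'
      · intro hwC
        apply hzC
        show z ∈ connectedComponentIn γᶜ x
        have e : connectedComponentIn γᶜ z = connectedComponentIn γᶜ x :=
          (connectedComponentIn_eq hw').trans (connectedComponentIn_eq hwC).symm
        rw [← e]
        exact mem_connectedComponentIn (connectedComponentIn_nonempty_iff.1 ⟨w, hw'⟩)
      · intro hwC
        exact hw' ((connectedComponentIn_subset γᶜ x) hwC)
  -- each T z is preconnected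
  have hTpc : ∀ z, IsPreconnected (T z) := by
    intro z
    by_cases hz : z ∈ γᶜ
    · have hD : IsConnected (connectedComponentIn γᶜ z) :=
        isConnected_connectedComponentIn_iff.2 hz
      have hDo : IsOpen (connectedComponentIn γᶜ z) := hF.connectedComponentIn
      have hfr : (frontier (connectedComponentIn γᶜ z)).Nonempty := by
        by_contra h
        rw [not_nonempty_iff_eq_empty, ← isClopen_iff_frontier_eq_empty] at h
        rcases isClopen_iff.1 h with h | h
        · exact hD.nonempty.ne_empty h
        · exact absurd hp ((connectedComponentIn_subset γᶜ z) (h ▸ mem_univ p))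
      obtain ⟨q, hq⟩ := hfr
      have hq₁ : q ∈ closure (connectedComponentIn γᶜ z) := hq.1
      have hq₂ : q ∈ γ := by
        rcases aux_closure_subset hF z hq₁ with h | h
        · exact absurd (show q ∈ interior (connectedComponentIn γᶜ z) by rwa [hDo.interior_eq]) hq.2
        · exact not_not.1 h
      exact hγpc.union q hq₂ hq₁ hD.isPreconnected.closure
    · rw [hT]
      simp only [connectedComponentIn_eq_empty hz, closure_empty, union_empty]
      exact hγpc
  -- (connectedComponentIn γᶜ x)ᶜ is the union
  have hU : (connectedComponentIn γᶜ x)ᶜ = ⋃₀ (T '' (connectedComponentIn γᶜ x)ᶜ) := by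
    apply Subset.antisymm
    · intro z hz
      refine mem_sUnion.2 ⟨T z, mem_image_of_mem _ hz, ?_⟩
      by_cases hzγ : z ∈ γ
      · exact Or.inl hzγ
      · exact Or.inr (subset_closure (mem_connectedComponentIn hzγ))
    · intro z hz
      rcases mem_sUnion.1 hz with ⟨t, ⟨w, hw, rfl⟩, hzt⟩
      exact hTsub w hw hzt
  rw [hU]
  refine isPreconnected_sUnion p _ ?_ ?_
  · rintro s ⟨w, hw, rfl⟩
    exact Or.inl hp
  · rintro s ⟨w, hw, rfl⟩
    exact hTpc w

private lemma aux_frontier_subset {γ : Set (EuclideanSpace ℝ (Fin 2))} (hγcl : IsClosed γ)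
    (x : EuclideanSpace ℝ (Fin 2)) : frontier (connectedComponentIn γᶜ x) ⊆ γ := by
  intro z hz
  by_contra hzγ
  have h1 := aux_mem_of_closure hγcl.isOpen_compl (x := x) hzγ hz.1
  have h2 : z ∈ interior (connectedComponentIn γᶜ x) := by
    rwa [(hγcl.isOpen_compl.connectedComponentIn (x := x)).interior_eq]
  exact hz.2 h2


/-- If `γ₁, γ₂` are disjoint Jordan curves in `ℝ²`, `C₁` is a bounded connected
component of `ℝ² \ γ₁` and `C₂` is a bounded connected component of `ℝ² \ γ₂`, then
exactly one of the following holds: `C₁ ⊆ C₂`, `C₂ ⊆ C₁`, or `C₁ ∩ C₂ = ∅`. -/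
theorem bounded_components_of_disjoint_jordan_curves_trichotomy
    (φ₁ φ₂ : (Metric.sphere (0 : EuclideanSpace ℝ (Fin 2)) 1 :
        Set (EuclideanSpace ℝ (Fin 2))) → EuclideanSpace ℝ (Fin 2))
    (hφ₁c : Continuous φ₁) (hφ₁i : Function.Injective φ₁)
    (hφ₂c : Continuous φ₂) (hφ₂i : Function.Injective φ₂)
    (γ₁ γ₂ : Set (EuclideanSpace ℝ (Fin 2)))
    (hγ₁ : γ₁ = Set.range φ₁) (hγ₂ : γ₂ = Set.range φ₂)
    (hdisj : γ₁ ∩ γ₂ = ∅)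
    (C₁ C₂ : Set (EuclideanSpace ℝ (Fin 2)))
    (hC₁ : ∃ x ∈ γ₁ᶜ, C₁ = connectedComponentIn γ₁ᶜ x) (hC₁b : Bornology.IsBounded C₁)
    (hC₂ : ∃ x ∈ γ₂ᶜ, C₂ = connectedComponentIn γ₂ᶜ x) (hC₂b : Bornology.IsBounded C₂) :
    (C₁ ⊆ C₂ ∧ ¬ C₂ ⊆ C₁ ∧ C₁ ∩ C₂ ≠ ∅) ∨
    (C₂ ⊆ C₁ ∧ ¬ C₁ ⊆ C₂ ∧ C₁ ∩ C₂ ≠ ∅) ∨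
    (C₁ ∩ C₂ = ∅ ∧ ¬ C₁ ⊆ C₂ ∧ ¬ C₂ ⊆ C₁) := by
  obtain ⟨x₁, hx₁, hC₁e⟩ := hC₁
  obtain ⟨x₂, hx₂, hC₂e⟩ := hC₂
  -- sphere is a compact connected nonempty space
  have hrank : 1 < Module.rank ℝ (EuclideanSpace ℝ (Fin 2)) := by
    rw [← Module.finrank_eq_rank, finrank_euclideanSpace_fin]
    exact_mod_cast one_lt_two
  have hsphere : IsConnected (Metric.sphere (0 : EuclideanSpace ℝ (Fin 2)) 1) :=
    isConnected_sphere hrank 0 zero_le_one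
  have : ConnectedSpace (Metric.sphere (0 : EuclideanSpace ℝ (Fin 2)) 1 :
      Set (EuclideanSpace ℝ (Fin 2))) := Subtype.connectedSpace hsphere
  have : CompactSpace (Metric.sphere (0 : EuclideanSpace ℝ (Fin 2)) 1 :
      Set (EuclideanSpace ℝ (Fin 2))) := isCompact_iff_compactSpace.1 (isCompact_sphere 0 1)
  have hγ₁cl : IsClosed γ₁ := hγ₁ ▸ (isCompact_range hφ₁c).isClosed
  have hγ₂cl : IsClosed γ₂ := hγ₂ ▸ (isCompact_range hφ₂c).isClosed
  have hγ₁conn : IsConnected γ₁ := hγ₁ ▸ isConnected_range hφ₁c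
  have hγ₂conn : IsConnected γ₂ := hγ₂ ▸ isConnected_range hφ₂c
  have hm₁ : x₁ ∈ C₁ := hC₁e ▸ mem_connectedComponentIn hx₁
  have hm₂ : x₂ ∈ C₂ := hC₂e ▸ mem_connectedComponentIn hx₂
  -- C₁ ≠ C₂
  have hne : C₁ ≠ C₂ := by
    intro h
    have hfr : (frontier C₁).Nonempty := by
      by_contra hh
      rw [not_nonempty_iff_eq_empty, ← isClopen_iff_frontier_eq_empty] at hh
      rcases isClopen_iff.1 hh with hh | hh
      · exact Set.eq_empty_iff_forall_notMem.1 hh x₁ hm₁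
      · exact NormedSpace.unbounded_univ ℝ (EuclideanSpace ℝ (Fin 2)) (hh ▸ hC₁b)
    obtain ⟨q, hq⟩ := hfr
    have hq₁ : q ∈ γ₁ := aux_frontier_subset hγ₁cl x₁ (by rw [← hC₁e]; exact hq)
    have hq₂ : q ∈ γ₂ := aux_frontier_subset hγ₂cl x₂ (by rw [← hC₂e, ← h]; exact hq)
    exact absurd (Set.mem_inter hq₁ hq₂) (hdisj ▸ Set.notMem_empty q)
  have hdisj' : ∀ z, z ∈ γ₁ → z ∉ γ₂ := fun z h1 h2 =>
    (hdisj ▸ Set.notMem_empty z) ⟨h1, h2⟩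
  obtain ⟨p, hp⟩ := hγ₂conn.nonempty
  have hpγ₁ : p ∈ γ₁ᶜ := fun h => hdisj' p h hp
  by_cases hD : connectedComponentIn γ₁ᶜ p = C₁
  · -- γ₂ ⊆ C₁, so C₂ ⊆ C₁
    have hγ₂C₁ : γ₂ ⊆ C₁ := hD ▸ hγ₂conn.isPreconnected.subset_connectedComponentIn
      hp (show γ₂ ⊆ γ₁ᶜ from fun z hz h => hdisj' z h hz)
    -- C₁ᶜ is preconnected, unbounded, inside γ₂ᶜ
    have hScon : IsPreconnected C₁ᶜ := hC₁e ▸ aux_compl_preconnected hγ₁cl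
      hγ₁conn.isPreconnected hγ₁conn.nonempty x₁
    have hSsub : C₁ᶜ ⊆ γ₂ᶜ := Set.compl_subset_compl.2 hγ₂C₁
    have hSne : C₁ᶜ.Nonempty := by
      rw [Set.nonempty_compl]
      intro h
      exact NormedSpace.unbounded_univ ℝ (EuclideanSpace ℝ (Fin 2)) (h ▸ hC₁b)
    obtain ⟨z, hz⟩ := hSne
    have hSsub' : C₁ᶜ ⊆ connectedComponentIn γ₂ᶜ z :=
      hScon.subset_connectedComponentIn hz hSsub
    have hC₂C₁ : C₂ ⊆ C₁ := by
      intro y hy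
      by_contra hyC₁
      have e : connectedComponentIn γ₂ᶜ x₂ = connectedComponentIn γ₂ᶜ z :=
        (connectedComponentIn_eq (hC₂e ▸ hy : y ∈ connectedComponentIn γ₂ᶜ x₂)).trans
          (connectedComponentIn_eq (hSsub' hyC₁)).symm
      have : C₁ᶜ ⊆ C₂ := hC₂e ▸ e ▸ hSsub'
      have : Bornology.IsBounded (Set.univ : Set (EuclideanSpace ℝ (Fin 2))) := by
        have := hC₁b.union (hC₂b.subset this)
        rwa [Set.union_compl_self] at this
      exact NormedSpace.unbounded_univ ℝ (EuclideanSpace ℝ (Fin 2)) this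
    refine Or.inr (Or.inl ⟨hC₂C₁, fun h => hne (h.antisymm hC₂C₁), fun h => ?_⟩)
    exact (h ▸ Set.notMem_empty x₂) ⟨hC₂C₁ hm₂, hm₂⟩
  · -- γ₂ ∩ C₁ = ∅, so C₁ lies in one component of γ₂ᶜ
    have hγ₂C₁ : ∀ z ∈ C₁, z ∉ γ₂ := by
      intro z hz hzγ₂
      apply hD
      have e1 : connectedComponentIn γ₁ᶜ p = connectedComponentIn γ₁ᶜ z :=
        connectedComponentIn_eq (hγ₂conn.isPreconnected.subset_connectedComponentIn
          hp (show γ₂ ⊆ γ₁ᶜ from fun w hw h => hdisj' w h hw) hzγ₂)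
      have e2 : connectedComponentIn γ₁ᶜ x₁ = connectedComponentIn γ₁ᶜ z :=
        connectedComponentIn_eq (hC₁e ▸ hz : z ∈ connectedComponentIn γ₁ᶜ x₁)
      exact (e1.trans e2.symm).trans hC₁e.symm
    have hC₁conn : IsPreconnected C₁ :=
      hC₁e ▸ (isConnected_connectedComponentIn_iff.2 hx₁).isPreconnected
    have hC₁sub : C₁ ⊆ connectedComponentIn γ₂ᶜ x₁ :=
      hC₁conn.subset_connectedComponentIn hm₁ (fun z hz => hγ₂C₁ z hz)
    by_cases hint : (C₁ ∩ C₂).Nonempty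
    · obtain ⟨y, hy₁, hy₂⟩ := hint
      have e : connectedComponentIn γ₂ᶜ x₁ = connectedComponentIn γ₂ᶜ x₂ :=
        (connectedComponentIn_eq (hC₁sub hy₁)).trans
          (connectedComponentIn_eq (hC₂e ▸ hy₂ : y ∈ connectedComponentIn γ₂ᶜ x₂)).symm
      have hsub : C₁ ⊆ C₂ := hC₂e ▸ e ▸ hC₁sub
      refine Or.inl ⟨hsub, fun h => hne (hsub.antisymm h), fun h => ?_⟩
      exact (h ▸ Set.notMem_empty y) ⟨hy₁, hy₂⟩
    · rw [Set.not_nonempty_iff_eq_empty] at hint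
      refine Or.inr (Or.inr ⟨hint, fun h => ?_, fun h => ?_⟩)
      · exact (hint ▸ Set.notMem_empty x₁) ⟨hm₁, h hm₁⟩
      · exact (hint ▸ Set.notMem_empty x₂) ⟨h hm₂, hm₂⟩
end

section
/- Let γ₁ and γ₂ be disjoint Jordan curves in ℝ², and let C₁ be a bounded connected component of ℝ² ∖ γ₁. If γ₂ ⊆ C₁, then every bounded connected component of ℝ² ∖ γ₂ is contained in C₁. -/
open Set

private lemma closure_trap {X : Type*} [TopologicalSpace X] [LocallyConnectedSpace X]
    {U : Set X} (hU : IsOpen U) (x : X) :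
    closure (connectedComponentIn U x) ∩ U ⊆ connectedComponentIn U x := by
  rintro y ⟨hyc, hyU⟩
  have hop : IsOpen (connectedComponentIn U y) := hU.connectedComponentIn
  have hne : (connectedComponentIn U y ∩ connectedComponentIn U x).Nonempty :=
    mem_closure_iff.mp hyc _ hop (mem_connectedComponentIn hyU)
  obtain ⟨z, hz1, hz2⟩ := hne
  have h1 := connectedComponentIn_eq hz1
  have h2 := connectedComponentIn_eq hz2
  rw [h2, ← h1]
  exact mem_connectedComponentIn hyU

private lemma no_mutual_containment {E : Type*} [NormedAddCommGroup E] [NormedSpace ℝ E]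
    [Nontrivial E] {C₁ C₂ : Set E}
    (h1o : IsOpen C₁) (h2o : IsOpen C₂) (h1b : Bornology.IsBounded C₁)
    (h2b : Bornology.IsBounded C₂) (hne : C₁.Nonempty)
    (h1c : closure C₁ ⊆ C₁ ∪ C₂) (h2c : closure C₂ ⊆ C₂ ∪ C₁) : False := by
  have hclosed : IsClosed (C₁ ∪ C₂) := by
    rw [← closure_eq_iff_isClosed]
    refine subset_antisymm ?_ subset_closure
    rw [closure_union]
    intro y hy
    rcases hy with hy | hy
    · exact h1c hy
    · exact (union_comm C₂ C₁) ▸ h2c hy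
  have hclopen : IsClopen (C₁ ∪ C₂) := ⟨hclosed, h1o.union h2o⟩
  have huniv : C₁ ∪ C₂ = univ :=
    hclopen.eq_univ (hne.mono subset_union_left)
  exact NormedSpace.unbounded_univ ℝ E (huniv ▸ h1b.union h2b)

/-- If `γ₁, γ₂` are disjoint Jordan curves in `ℝ²`, `C₁` is a bounded connected
component of `ℝ² \ γ₁`, and `γ₂ ⊆ C₁`, then every bounded connected component of
`ℝ² \ γ₂` is contained in `C₁`. -/
theorem bounded_components_subset_of_jordan_curve_inside
    (φ₁ φ₂ : (Metric.sphere (0 : EuclideanSpace ℝ (Fin 2)) 1 :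
        Set (EuclideanSpace ℝ (Fin 2))) → EuclideanSpace ℝ (Fin 2))
    (hφ₁c : Continuous φ₁) (hφ₁i : Function.Injective φ₁)
    (hφ₂c : Continuous φ₂) (hφ₂i : Function.Injective φ₂)
    (γ₁ γ₂ : Set (EuclideanSpace ℝ (Fin 2)))
    (hγ₁ : γ₁ = Set.range φ₁) (hγ₂ : γ₂ = Set.range φ₂)
    (hdisj : γ₁ ∩ γ₂ = ∅)
    (C₁ : Set (EuclideanSpace ℝ (Fin 2)))
    (hC₁ : ∃ x ∈ γ₁ᶜ, C₁ = connectedComponentIn γ₁ᶜ x) (hC₁b : Bornology.IsBounded C₁)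
    (hsub : γ₂ ⊆ C₁) :
    ∀ C₂ : Set (EuclideanSpace ℝ (Fin 2)),
      (∃ x ∈ γ₂ᶜ, C₂ = connectedComponentIn γ₂ᶜ x) → Bornology.IsBounded C₂ →
      C₂ ⊆ C₁ := by
  intro C₂ hC₂ hC₂b
  obtain ⟨x₁, hx₁, hC₁eq⟩ := hC₁
  obtain ⟨x₂, hx₂, hC₂eq⟩ := hC₂
  -- basic facts about the sphere
  have hrank : (1 : Cardinal) < Module.rank ℝ (EuclideanSpace ℝ (Fin 2)) := by
    rw [← Module.finrank_eq_rank]; norm_cast; simp [finrank_euclideanSpace_fin]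
  have hsphere : IsConnected (Metric.sphere (0 : EuclideanSpace ℝ (Fin 2)) 1) :=
    isConnected_sphere hrank 0 zero_le_one
  haveI : ConnectedSpace (Metric.sphere (0 : EuclideanSpace ℝ (Fin 2)) 1 :
      Set (EuclideanSpace ℝ (Fin 2))) := Subtype.connectedSpace hsphere
  -- the curves are compact, connected, nonempty
  have hγ₁comp : IsCompact γ₁ := hγ₁ ▸ isCompact_range hφ₁c
  have hγ₂comp : IsCompact γ₂ := hγ₂ ▸ isCompact_range hφ₂c
  have hγ₁conn : IsConnected γ₁ := hγ₁ ▸ isConnected_range hφ₁c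
  have hγ₂ne : γ₂.Nonempty := hγ₂ ▸ range_nonempty φ₂
  -- complements are open
  have ho₁ : IsOpen γ₁ᶜ := hγ₁comp.isClosed.isOpen_compl
  have ho₂ : IsOpen γ₂ᶜ := hγ₂comp.isClosed.isOpen_compl
  -- components are open
  have hC₁o : IsOpen C₁ := hC₁eq ▸ ho₁.connectedComponentIn
  have hC₂o : IsOpen C₂ := hC₂eq ▸ ho₂.connectedComponentIn
  -- closure traps
  have hC₁cl : closure C₁ ⊆ C₁ ∪ γ₁ := by
    intro y hy
    by_cases hyγ : y ∈ γ₁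
    · exact Or.inr hyγ
    · exact Or.inl (hC₁eq ▸ closure_trap ho₁ x₁ ⟨hC₁eq ▸ hy, hyγ⟩)
  have hC₂cl : closure C₂ ⊆ C₂ ∪ γ₂ := by
    intro y hy
    by_cases hyγ : y ∈ γ₂
    · exact Or.inr hyγ
    · exact Or.inl (hC₂eq ▸ closure_trap ho₂ x₂ ⟨hC₂eq ▸ hy, hyγ⟩)
  have hC₁sub : C₁ ⊆ γ₁ᶜ := hC₁eq ▸ connectedComponentIn_subset γ₁ᶜ x₁
  have hC₂sub : C₂ ⊆ γ₂ᶜ := hC₂eq ▸ connectedComponentIn_subset γ₂ᶜ x₂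
  have hC₁ne : C₁.Nonempty := ⟨x₁, hC₁eq ▸ mem_connectedComponentIn hx₁⟩
  have hC₂ne : C₂.Nonempty := ⟨x₂, hC₂eq ▸ mem_connectedComponentIn hx₂⟩
  -- Step A : C₂ ∩ γ₁ = ∅, i.e. C₂ ⊆ γ₁ᶜ
  have hstepA : C₂ ⊆ γ₁ᶜ := by
    by_contra h
    obtain ⟨w, hwC₂, hwγ₁⟩ : ∃ w, w ∈ C₂ ∧ w ∈ γ₁ := by
      simp only [subset_def, mem_compl_iff, not_forall] at h
      obtain ⟨w, hw1, hw2⟩ := h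
      exact ⟨w, hw1, not_not.mp hw2⟩
    -- γ₁ ⊆ C₂
    have hγ₁γ₂c : γ₁ ⊆ γ₂ᶜ := by
      intro a ha hb
      exact absurd hdisj (by rw [eq_empty_iff_forall_notMem]; push_neg; exact ⟨a, ha, hb⟩)
    have hwmem : w ∈ connectedComponentIn γ₂ᶜ x₂ := hC₂eq ▸ hwC₂
    have hγ₁C₂ : γ₁ ⊆ C₂ := by
      rw [hC₂eq, connectedComponentIn_eq hwmem]
      exact hγ₁conn.isPreconnected.subset_connectedComponentIn hwγ₁ hγ₁γ₂c
    -- mutual containment : contradiction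
    exact no_mutual_containment hC₁o hC₂o hC₁b hC₂b hC₁ne
      (hC₁cl.trans (union_subset_union_right C₁ hγ₁C₂))
      (hC₂cl.trans (union_subset_union_right C₂ hsub))
  -- Step B : C₂ has a frontier point, lying in γ₂ ⊆ C₁
  have hfr : ∃ y ∈ closure C₂, y ∉ C₂ := by
    by_contra h
    push_neg at h
    have hcl : IsClosed C₂ := by
      rw [← closure_eq_iff_isClosed]
      exact subset_antisymm h subset_closure
    have : C₂ = univ := IsClopen.eq_univ ⟨hcl, hC₂o⟩ hC₂ne
    exact NormedSpace.unbounded_univ ℝ (EuclideanSpace ℝ (Fin 2)) (this ▸ hC₂b)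
  obtain ⟨y, hycl, hync⟩ := hfr
  have hyγ₂ : y ∈ γ₂ := (hC₂cl hycl).resolve_left hync
  have hyC₁ : y ∈ C₁ := hsub hyγ₂
  obtain ⟨z, hzC₁, hzC₂⟩ : (C₁ ∩ C₂).Nonempty :=
    mem_closure_iff.mp hycl C₁ hC₁o hyC₁
  -- conclude
  have hzmem : z ∈ connectedComponentIn γ₁ᶜ x₁ := hC₁eq ▸ hzC₁
  have hC₂conn : IsPreconnected C₂ := hC₂eq ▸ isPreconnected_connectedComponentIn
  calc C₂ ⊆ connectedComponentIn γ₁ᶜ z :=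
        hC₂conn.subset_connectedComponentIn hzC₂ hstepA
    _ = connectedComponentIn γ₁ᶜ x₁ := (connectedComponentIn_eq hzmem).symm
    _ = C₁ := hC₁eq.symm
end

section
/- Let P be a finite partial order such that for every x ∈ P the up-set {y ∈ P : x ≤ y} is totally ordered (a chain). Then P is a circle containment order: there exist a center function c : P → ℝ² and a radius function r : P → ℝ with r(p) > 0 for all p, such that for all p, q ∈ P one has p ≤ q if and only if the closed disc of center c(p) and radius r(p) is contained in the closed disc of center c(q) and radius r(q). -/
set_option linter.unusedSectionVars false

open Finset

namespace CircleAux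

variable {P : Type*} [Fintype P] [PartialOrder P]

open Classical in
/-- number of elements strictly above `p` -/
noncomputable def dd (p : P) : ℕ := (Finset.univ.filter fun z => p < z).card

/-- injective labeling with values in `[1, card P]` -/
noncomputable def aa (p : P) : ℕ := (Fintype.equivFin P p : ℕ) + 1

/-- base of the expansion (as a real) -/
noncomputable def tt (P : Type*) [Fintype P] : ℝ := (16 * (Fintype.card P : ℝ) + 16)⁻¹

open Classical in
noncomputable def Uu (p : P) : Finset P := Finset.univ.filter fun z => p ≤ z

noncomputable def xx (p : P) : ℝ := ∑ z ∈ Uu p, (aa z : ℝ) * tt P ^ dd z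

noncomputable def rr (p : P) : ℝ := tt P ^ dd p / 4

lemma mem_Uu {p z : P} : z ∈ Uu p ↔ p ≤ z := by classical simp [Uu]

lemma aa_one_le (p : P) : 1 ≤ aa p := Nat.le_add_left 1 _

lemma aa_le_card (p : P) : aa p ≤ Fintype.card P := (Fintype.equivFin P p).is_lt

lemma aa_inj : Function.Injective (aa (P := P)) := by
  intro p q h
  exact (Fintype.equivFin P).injective (Fin.ext (Nat.succ_injective h))

lemma dd_le_card (p : P) : dd p ≤ Fintype.card P := by
  classical
  exact le_trans (Finset.card_filter_le _ _) (le_of_eq (Finset.card_univ))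

lemma dd_lt_dd {p q : P} (h : p < q) : dd q < dd p := by
  classical
  apply Finset.card_lt_card
  constructor
  · intro z hz
    simp only [Finset.mem_filter, Finset.mem_univ, true_and] at hz ⊢
    exact lt_trans h hz
  · intro hsub
    have : q ∈ Finset.univ.filter fun z => p < z := by
      simp only [Finset.mem_filter, Finset.mem_univ, true_and]; exact h
    have := hsub this
    simp only [Finset.mem_filter, Finset.mem_univ, true_and] at this
    exact lt_irrefl q this

lemma tt_pos : 0 < tt P := by
  have : (0:ℝ) ≤ (Fintype.card P : ℝ) := Nat.cast_nonneg _
  rw [tt]; positivity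

lemma tt_le_half : tt P ≤ 1 / 2 := by
  have h : (0:ℝ) ≤ (Fintype.card P : ℝ) := Nat.cast_nonneg _
  rw [tt, inv_le_comm₀ (by positivity) (by norm_num)]
  linarith

lemma tt_mul_card : 2 * (Fintype.card P : ℝ) * tt P ≤ 1 / 8 := by
  have h : (0:ℝ) ≤ (Fintype.card P : ℝ) := Nat.cast_nonneg _
  rw [tt]
  rw [mul_inv_le_iff₀ (by positivity)]
  linarith


lemma tt_le_one : tt P ≤ 1 := le_trans tt_le_half (by norm_num)

lemma sum_bound (S : Finset P) (m : ℕ)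
    (hm : ∀ z ∈ S, m < dd z)
    (hinj : ∀ y ∈ S, ∀ z ∈ S, dd y = dd z → y = z) :
    ∑ z ∈ S, (aa z : ℝ) * tt P ^ dd z
      ≤ 2 * (Fintype.card P : ℝ) * tt P ^ (m + 1) := by
  classical
  have ht0 : (0:ℝ) < tt P := tt_pos
  have step1 : ∑ z ∈ S, (aa z : ℝ) * tt P ^ dd z
      ≤ (Fintype.card P : ℝ) * ∑ z ∈ S, tt P ^ dd z := by
    rw [Finset.mul_sum]
    apply Finset.sum_le_sum
    intro z hz
    have : (aa z : ℝ) ≤ (Fintype.card P : ℝ) := by exact_mod_cast aa_le_card z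
    nlinarith [pow_pos ht0 (dd z)]
  have step2 : ∑ z ∈ S, tt P ^ dd z = ∑ j ∈ S.image dd, tt P ^ j :=
    (Finset.sum_image (fun y hy z hz h => hinj y hy z hz h)).symm
  have hsub : S.image dd ⊆ Finset.Ico (m + 1) (Fintype.card P + 1) := by
    intro j hj
    obtain ⟨z, hz, rfl⟩ := Finset.mem_image.mp hj
    exact Finset.mem_Ico.mpr ⟨hm z hz, Nat.lt_succ_of_le (dd_le_card z)⟩
  have step3 : ∑ j ∈ S.image dd, tt P ^ j
      ≤ ∑ j ∈ Finset.Ico (m + 1) (Fintype.card P + 1), tt P ^ j := by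
    apply Finset.sum_le_sum_of_subset_of_nonneg hsub
    intro j _ _
    exact le_of_lt (pow_pos ht0 j)
  have step4 : ∑ j ∈ Finset.Ico (m + 1) (Fintype.card P + 1), tt P ^ j
      ≤ tt P ^ (m + 1) / (1 - tt P) :=
    geom_sum_Ico_le_of_lt_one (le_of_lt ht0) (lt_of_le_of_lt tt_le_half (by norm_num))
  have step5 : tt P ^ (m + 1) / (1 - tt P) ≤ 2 * tt P ^ (m + 1) := by
    rw [div_le_iff₀ (by linarith [tt_le_half (P := P)])]
    nlinarith [pow_pos ht0 (m + 1), tt_le_half (P := P)]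
  have hcard1 : (1:ℝ) ≤ 2 * (Fintype.card P : ℝ) ∨ S = ∅ := by
    rcases Finset.eq_empty_or_nonempty S with h | ⟨z, hz⟩
    · exact Or.inr h
    · left
      have h1 : 1 ≤ Fintype.card P := Fintype.card_pos_iff.mpr ⟨z⟩
      have : (1:ℝ) ≤ (Fintype.card P : ℝ) := by exact_mod_cast h1
      linarith
  rcases hcard1 with hc | rfl
  · calc ∑ z ∈ S, (aa z : ℝ) * tt P ^ dd z
        ≤ (Fintype.card P : ℝ) * ∑ z ∈ S, tt P ^ dd z := step1
      _ ≤ (Fintype.card P : ℝ) * (2 * tt P ^ (m+1)) := by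
          apply mul_le_mul_of_nonneg_left _ (Nat.cast_nonneg _)
          rw [step2]; linarith
      _ = 2 * (Fintype.card P : ℝ) * tt P ^ (m + 1) := by ring
  · simp only [Finset.sum_empty]
    positivity

lemma Uu_subset {p q : P} (h : p ≤ q) : Uu q ⊆ Uu p := by
  intro z hz
  exact mem_Uu.mpr (le_trans h (mem_Uu.mp hz))

lemma dd_inj_on_Uu (hchain : ∀ x : P, IsChain (· ≤ ·) {y : P | x ≤ y}) (p : P) :
    ∀ y ∈ Uu p, ∀ z ∈ Uu p, dd y = dd z → y = z := by
  intro y hy z hz hd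
  by_contra hne
  rcases hchain p (mem_Uu.mp hy) (mem_Uu.mp hz) hne with h | h
  · exact absurd hd (ne_of_gt (dd_lt_dd (lt_of_le_of_ne h hne)))
  · exact absurd hd.symm (ne_of_gt (dd_lt_dd (lt_of_le_of_ne h (Ne.symm hne))))

/-- core estimate: if `z0 ∈ S` has minimal depth among `S ∪ T` and among
elements of `T` of the same depth the label is dominated by `aa z0`, then the
`T`-sum is well below the `S`-sum. -/
lemma core (S T : Finset P) (hdisj : ∀ w ∈ T, w ∉ S)
    (hdT : ∀ y ∈ T, ∀ z ∈ T, dd y = dd z → y = z)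
    (z0 : P) (hz0S : z0 ∈ S)
    (hmin : ∀ w ∈ T, dd z0 ≤ dd w)
    (hmax : ∀ w ∈ T, dd w = dd z0 → aa w ≤ aa z0) :
    ∑ z ∈ T, (aa z : ℝ) * tt P ^ dd z
      ≤ (∑ z ∈ S, (aa z : ℝ) * tt P ^ dd z) - tt P ^ dd z0 / 2 := by
  classical
  have ht0 : (0:ℝ) < tt P := tt_pos
  set j := dd z0 with hj
  have hpow : (0:ℝ) < tt P ^ j := pow_pos ht0 j
  have hSge : (aa z0 : ℝ) * tt P ^ j ≤ ∑ z ∈ S, (aa z : ℝ) * tt P ^ dd z := by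
    have := Finset.single_le_sum
      (f := fun z => (aa z : ℝ) * tt P ^ dd z)
      (fun z _ => by positivity) hz0S
    simpa using this
  have haz0 : (1:ℝ) ≤ (aa z0 : ℝ) := by exact_mod_cast aa_one_le z0
  have h2nt : 2 * (Fintype.card P : ℝ) * tt P ^ (j + 1) ≤ tt P ^ j / 8 := by
    have := tt_mul_card (P := P)
    have h := mul_le_mul_of_nonneg_right this (le_of_lt hpow)
    calc 2 * (Fintype.card P : ℝ) * tt P ^ (j + 1)
        = 2 * (Fintype.card P : ℝ) * tt P * tt P ^ j := by ring
      _ ≤ 1 / 8 * tt P ^ j := h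
      _ = tt P ^ j / 8 := by ring
  by_cases hw : ∃ w ∈ T, dd w = j
  · obtain ⟨w0, hw0T, hw0d⟩ := hw
    have herase : ∑ z ∈ T.erase w0, (aa z : ℝ) * tt P ^ dd z
        ≤ 2 * (Fintype.card P : ℝ) * tt P ^ (j + 1) := by
      apply sum_bound
      · intro z hz
        have hzT := Finset.mem_of_mem_erase hz
        have hzne := Finset.ne_of_mem_erase hz
        have : dd z ≠ j := fun h => hzne (hdT z hzT w0 hw0T (h.trans hw0d.symm))
        exact lt_of_le_of_ne (hmin z hzT) (Ne.symm this)
      · intro y hy z hz h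
        exact hdT y (Finset.mem_of_mem_erase hy) z (Finset.mem_of_mem_erase hz) h
    have hsplit : ∑ z ∈ T, (aa z : ℝ) * tt P ^ dd z
        = (aa w0 : ℝ) * tt P ^ j + ∑ z ∈ T.erase w0, (aa z : ℝ) * tt P ^ dd z := by
      rw [← Finset.add_sum_erase _ _ hw0T, hw0d]
    have haw0 : (aa w0 : ℝ) ≤ (aa z0 : ℝ) - 1 := by
      have hne : w0 ≠ z0 := fun h => hdisj w0 hw0T (h ▸ hz0S)
      have h1 : aa w0 ≠ aa z0 := fun h => hne (aa_inj h)
      have h2 : aa w0 ≤ aa z0 := hmax w0 hw0T hw0d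
      have : aa w0 + 1 ≤ aa z0 := Nat.lt_of_le_of_ne h2 h1
      have := (Nat.cast_le (α := ℝ)).mpr this
      push_cast at this
      linarith
    rw [hsplit]
    nlinarith
  · push_neg at hw
    have hT : ∑ z ∈ T, (aa z : ℝ) * tt P ^ dd z
        ≤ 2 * (Fintype.card P : ℝ) * tt P ^ (j + 1) := by
      apply sum_bound
      · intro z hz
        exact lt_of_le_of_ne (hmin z hz) (Ne.symm (hw z hz))
      · exact hdT
    nlinarith

lemma key (hchain : ∀ x : P, IsChain (· ≤ ·) {y : P | x ≤ y}) (p q : P) :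
    p ≤ q ↔ |xx p - xx q| + rr p ≤ rr q := by
  classical
  have ht0 : (0:ℝ) < tt P := tt_pos
  have ht1 : tt P ≤ 1 := tt_le_one
  constructor
  · -- forward direction
    intro hle
    rcases eq_or_lt_of_le hle with rfl | hlt
    · simp
    have hsub : Uu q ⊆ Uu p := Uu_subset hle
    have hsdiff : ∑ z ∈ Uu p \ Uu q, (aa z : ℝ) * tt P ^ dd z = xx p - xx q := by
      have := Finset.sum_sdiff (f := fun z => (aa z : ℝ) * tt P ^ dd z) hsub
      rw [xx, xx]; linarith
    have hnonneg : 0 ≤ xx p - xx q := by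
      rw [← hsdiff]
      apply Finset.sum_nonneg
      intro z _; positivity
    have hbound : xx p - xx q ≤ 2 * (Fintype.card P : ℝ) * tt P ^ (dd q + 1) := by
      rw [← hsdiff]
      apply sum_bound
      · intro z hz
        rw [Finset.mem_sdiff, mem_Uu, mem_Uu] at hz
        obtain ⟨hpz, hqz⟩ := hz
        have hne : z ≠ q := fun h => hqz (h ▸ le_refl q)
        rcases hchain p hpz hle hne with h | h
        · exact dd_lt_dd (lt_of_le_of_ne h hne)
        · exact absurd h hqz
      · intro y hy z hz h
        exact dd_inj_on_Uu hchain p y (Finset.mem_sdiff.mp hy).1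
          z (Finset.mem_sdiff.mp hz).1 h
    rw [abs_of_nonneg hnonneg, rr, rr]
    have hdpq : dd q + 1 ≤ dd p := dd_lt_dd hlt
    have hpowle : tt P ^ dd p ≤ tt P ^ (dd q + 1) :=
      pow_le_pow_of_le_one (le_of_lt ht0) ht1 hdpq
    have h2nt : 2 * (Fintype.card P : ℝ) * tt P ^ (dd q + 1) ≤ tt P ^ dd q / 8 := by
      have h := mul_le_mul_of_nonneg_right (tt_mul_card (P := P))
        (le_of_lt (pow_pos ht0 (dd q)))
      calc 2 * (Fintype.card P : ℝ) * tt P ^ (dd q + 1)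
          = 2 * (Fintype.card P : ℝ) * tt P * tt P ^ dd q := by ring
        _ ≤ 1 / 8 * tt P ^ dd q := h
        _ = tt P ^ dd q / 8 := by ring
    have htq : tt P ^ (dd q + 1) ≤ tt P ^ dd q / 2 := by
      have : tt P ^ (dd q + 1) = tt P * tt P ^ dd q := by ring
      rw [this]
      nlinarith [pow_pos ht0 (dd q), tt_le_half (P := P)]
    linarith
  · -- backward direction, by contraposition
    intro hball
    by_contra hnle
    have hmain : rr q < |xx p - xx q| + rr p := by
      by_cases hqp : q ≤ p
      · -- q < p
        have hqlt : q < p := lt_of_le_of_ne hqp (fun h => hnle (h ▸ le_refl q))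
        have hsub : Uu p ⊆ Uu q := Uu_subset hqp
        have hsdiff : ∑ z ∈ Uu q \ Uu p, (aa z : ℝ) * tt P ^ dd z = xx q - xx p := by
          have := Finset.sum_sdiff (f := fun z => (aa z : ℝ) * tt P ^ dd z) hsub
          rw [xx, xx]; linarith only [this]
        have hqmem : q ∈ Uu q \ Uu p := by
          rw [Finset.mem_sdiff, mem_Uu, mem_Uu]
          exact ⟨le_refl q, hnle⟩
        have hge : tt P ^ dd q ≤ xx q - xx p := by
          rw [← hsdiff]
          calc tt P ^ dd q ≤ (aa q : ℝ) * tt P ^ dd q := by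
                have : (1:ℝ) ≤ (aa q : ℝ) := by exact_mod_cast aa_one_le q
                nlinarith only [pow_pos ht0 (dd q), this]
            _ ≤ _ := Finset.single_le_sum
                (f := fun z => (aa z : ℝ) * tt P ^ dd z)
                (fun z _ => by positivity) hqmem
        have habs : tt P ^ dd q ≤ |xx p - xx q| := le_trans hge (by
          rw [abs_sub_comm]; exact le_abs_self _)
        have : rr q ≤ tt P ^ dd q / 4 := le_of_eq rfl
        have hrp : 0 < rr p := by rw [rr]; positivity
        have hp4 : tt P ^ dd q / 4 < tt P ^ dd q := by linarith only [pow_pos ht0 (dd q)]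
        linarith only [habs, this, hrp, hp4]
      · -- incomparable
        set A := Uu p \ Uu q with hA
        set B := Uu q \ Uu p with hB
        have hxpq : xx p - xx q
            = (∑ z ∈ A, (aa z : ℝ) * tt P ^ dd z) - ∑ z ∈ B, (aa z : ℝ) * tt P ^ dd z := by
          rw [hA, hB, Finset.sum_sdiff_sub_sum_sdiff, xx, xx]
        have hpA : p ∈ A := by
          rw [hA, Finset.mem_sdiff, mem_Uu, mem_Uu]; exact ⟨le_refl p, hqp⟩
        have hqB : q ∈ B := by
          rw [hB, Finset.mem_sdiff, mem_Uu, mem_Uu]; exact ⟨le_refl q, hnle⟩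
        -- pick the element of A ∪ B minimizing depth, ties broken by maximal label
        set n := Fintype.card P with hn
        set phi : P → ℕ := fun z => (n + 2) * dd z + (n + 1 - aa z) with hphi
        obtain ⟨z0, hz0mem, hz0min⟩ :=
          Finset.exists_min_image (A ∪ B) phi ⟨p, Finset.mem_union_left _ hpA⟩
        have hdmin : ∀ w ∈ A ∪ B, dd z0 ≤ dd w := by
          intro w hw
          by_contra hlt
          push_neg at hlt
          have h1 : phi w < phi z0 := by
            have haw : n + 1 - aa w ≤ n := by have := aa_one_le w; omega
            have hd1 : dd w + 1 ≤ dd z0 := hlt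
            have hmul : (n+2) * (dd w + 1) ≤ (n+2) * dd z0 := Nat.mul_le_mul_left _ hd1
            calc phi w = (n+2) * dd w + (n+1-aa w) := rfl
              _ ≤ (n+2) * dd w + n := Nat.add_le_add_left haw _
              _ < (n+2) * dd w + (n+2) := by omega
              _ = (n+2) * (dd w + 1) := by ring
              _ ≤ (n+2) * dd z0 := hmul
              _ ≤ phi z0 := Nat.le_add_right _ _
          exact absurd (hz0min w hw) (not_le_of_gt h1)
        have hamax : ∀ w ∈ A ∪ B, dd w = dd z0 → aa w ≤ aa z0 := by
          intro w hw hd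
          have := hz0min w hw
          simp only [hphi, hd] at this
          have h3 : n + 1 - aa z0 ≤ n + 1 - aa w := le_of_add_le_add_left this
          have h1 : aa w ≤ n := aa_le_card w
          have h2 : aa z0 ≤ n := aa_le_card z0
          omega
        have hdisjAB : ∀ w ∈ B, w ∉ A := by
          intro w hwB hwA
          rw [hA, Finset.mem_sdiff] at hwA
          rw [hB, Finset.mem_sdiff] at hwB
          exact hwA.2 hwB.1
        have hdisjBA : ∀ w ∈ A, w ∉ B := by
          intro w hwA hwB
          rw [hA, Finset.mem_sdiff] at hwA
          rw [hB, Finset.mem_sdiff] at hwB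
          exact hwA.2 hwB.1
        have hdA : ∀ y ∈ A, ∀ z ∈ A, dd y = dd z → y = z := by
          intro y hy z hz h
          exact dd_inj_on_Uu hchain p y (Finset.mem_sdiff.mp hy).1
            z (Finset.mem_sdiff.mp hz).1 h
        have hdB : ∀ y ∈ B, ∀ z ∈ B, dd y = dd z → y = z := by
          intro y hy z hz h
          exact dd_inj_on_Uu hchain q y (Finset.mem_sdiff.mp hy).1
            z (Finset.mem_sdiff.mp hz).1 h
        have hjq : dd z0 ≤ dd q := hdmin q (Finset.mem_union_right _ hqB)
        have hpowjq : tt P ^ dd q ≤ tt P ^ dd z0 :=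
          pow_le_pow_of_le_one (le_of_lt ht0) ht1 hjq
        have habs : tt P ^ dd z0 / 2 ≤ |xx p - xx q| := by
          rcases Finset.mem_union.mp hz0mem with hz0A | hz0B
          · have := core A B hdisjAB hdB z0 hz0A
              (fun w hw => hdmin w (Finset.mem_union_right _ hw))
              (fun w hw h => hamax w (Finset.mem_union_right _ hw) h)
            have h1 : tt P ^ dd z0 / 2 ≤ xx p - xx q := by
              linarith only [this, hxpq]
            exact le_trans h1 (le_abs_self _)
          · have := core B A hdisjBA hdA z0 hz0B
              (fun w hw => hdmin w (Finset.mem_union_left _ hw))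
              (fun w hw h => hamax w (Finset.mem_union_left _ hw) h)
            have h1 : tt P ^ dd z0 / 2 ≤ xx q - xx p := by
              linarith only [this, hxpq]
            calc tt P ^ dd z0 / 2 ≤ xx q - xx p := h1
              _ ≤ |xx q - xx p| := le_abs_self _
              _ = |xx p - xx q| := abs_sub_comm _ _
        have hrp : 0 < rr p := by rw [rr]; positivity
        have : rr q ≤ tt P ^ dd q / 4 := le_of_eq rfl
        have h4 : tt P ^ dd q / 4 < tt P ^ dd z0 / 2 := by
          linarith only [pow_pos ht0 (dd q), hpowjq]
        linarith only [habs, this, h4, hrp, hpowjq]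
    exact absurd hball (not_le.mpr hmain)

end CircleAux

/-- A finite partial order in which every up-set `{y | x ≤ y}` is a chain is a
circle containment order: one can assign to each element a closed disc (closed
metric ball of positive radius) in `ℝ²` so that `p ≤ q` holds exactly when the
disc assigned to `p` is contained in the disc assigned to `q`. -/
theorem circle_containment_order_of_upsets_chains
    {P : Type*} [Fintype P] [PartialOrder P]
    (hchain : ∀ x : P, IsChain (· ≤ ·) {y : P | x ≤ y}) :
    ∃ (c : P → EuclideanSpace ℝ (Fin 2)) (r : P → ℝ),
      (∀ p, 0 < r p) ∧
      ∀ p q : P, p ≤ q ↔ Metric.closedBall (c p) (r p) ⊆ Metric.closedBall (c q) (r q) := by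
  classical
  set e : EuclideanSpace ℝ (Fin 2) := EuclideanSpace.single (0 : Fin 2) (1 : ℝ) with he
  have hnorm : ‖e‖ = 1 := by rw [he, EuclideanSpace.norm_single]; norm_num
  have hrpos : ∀ p : P, 0 < CircleAux.rr p := by
    intro p
    have := CircleAux.tt_pos (P := P)
    rw [CircleAux.rr]
    positivity
  have hdist : ∀ u v : ℝ, dist (u • e) (v • e) = |u - v| := by
    intro u v
    rw [dist_eq_norm, ← sub_smul, norm_smul, hnorm, mul_one, Real.norm_eq_abs]
  refine ⟨fun p => CircleAux.xx p • e, CircleAux.rr, hrpos, ?_⟩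
  intro p q
  rw [CircleAux.key hchain p q]
  constructor
  · intro h
    apply Metric.closedBall_subset_closedBall'
    rw [hdist]
    linarith only [h]
  · intro hsub
    have hrp := hrpos p
    rcases le_total (CircleAux.xx q) (CircleAux.xx p) with hle | hle
    · have hmem : (CircleAux.xx p + CircleAux.rr p) • e
          ∈ Metric.closedBall (CircleAux.xx p • e) (CircleAux.rr p) := by
        rw [Metric.mem_closedBall, hdist]
        rw [show CircleAux.xx p + CircleAux.rr p - CircleAux.xx p = CircleAux.rr p by ring,
          abs_of_nonneg (le_of_lt hrp)]
      have hin := hsub hmem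
      rw [Metric.mem_closedBall, hdist] at hin
      rw [abs_of_nonneg (by linarith only [hrp, hle])] at hin
      rw [abs_of_nonneg (by linarith only [hle])]
      linarith only [hin]
    · have hmem : (CircleAux.xx p - CircleAux.rr p) • e
          ∈ Metric.closedBall (CircleAux.xx p • e) (CircleAux.rr p) := by
        rw [Metric.mem_closedBall, hdist]
        rw [show CircleAux.xx p - CircleAux.rr p - CircleAux.xx p = -CircleAux.rr p by ring,
          abs_neg, abs_of_nonneg (le_of_lt hrp)]
      have hin := hsub hmem
      rw [Metric.mem_closedBall, hdist] at hin
      rw [abs_of_nonpos (by linarith only [hrp, hle]), neg_sub] at hin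
      rw [abs_of_nonpos (by linarith only [hle]), neg_sub]
      linarith only [hin]
end

section
/- Let ι be a finite index type and let S : ι → Set α be an injective family of sets that is laminar, i.e. for all i, j either S i ⊆ S j, or S j ⊆ S i, or S i ∩ S j = ∅. Then the containment order on the family can be realized by closed discs in the plane: there exist c : ι → ℝ² and r : ι → ℝ with r(i) > 0 for all i, such that for all i, j one has S i ⊆ S j if and only if the closed disc of center c(i) and radius r(i) is contained in the closed disc of center c(j) and radius r(j). -/
/-!
Encode each member `S i` by a point `φ i ∈ ℝ × ℝ` so that `S i ⊆ S j ↔ φ i ≤ φ j` in the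
coordinatewise order; the interval `[-(φ i).1, (φ i).2]`, drawn as a disc with centre on a line,
then realizes the order, since discs with collinear centres nest exactly when their diameters do.
Such a `φ` is built by strong induction on the family: an empty member or a largest member is a
new bottom or top, and otherwise a maximal member `S m` is disjoint from every member not inside
it, so the members below `S m` and the others can be encoded separately and placed side by side,
the second block to the right of and below the first.
-/

open Metric Finset Function

theorem closedBall_subset_closedBall_iff {E : Type*} [NormedAddCommGroup E] [NormedSpace ℝ E]
    [Nontrivial E] {x y : E} {r R : ℝ} (hr : 0 ≤ r) :
    closedBall x r ⊆ closedBall y R ↔ r + dist x y ≤ R := by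
  refine ⟨fun h => ?_, closedBall_subset_closedBall'⟩
  obtain ⟨u, hu, hxy⟩ : ∃ u : E, ‖u‖ = 1 ∧ x - y = ‖x - y‖ • u := by
    rcases eq_or_ne x y with rfl | hne
    · obtain ⟨u, hu⟩ := exists_norm_eq E zero_le_one
      exact ⟨u, hu, by simp⟩
    · have hne' : ‖x - y‖ ≠ 0 := norm_ne_zero_iff.2 (sub_ne_zero.2 hne)
      exact ⟨‖x - y‖⁻¹ • (x - y), norm_smul_inv_norm (sub_ne_zero.2 hne),
        by rw [smul_smul, mul_inv_cancel₀ hne', one_smul]⟩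
  have hmem : x + r • u ∈ closedBall y R :=
    h (by simp [mem_closedBall, norm_smul, hu, abs_of_nonneg hr])
  have hsub : x + r • u - y = (‖x - y‖ + r) • u := by
    rw [add_smul, ← hxy]
    abel
  rw [mem_closedBall, dist_eq_norm, hsub, norm_smul, hu, mul_one,
    Real.norm_of_nonneg (by positivity)] at hmem
  rwa [dist_eq_norm, add_comm]

theorem closedBall_smul_subset_closedBall_smul_iff {E : Type*} [NormedAddCommGroup E]
    [NormedSpace ℝ E] {v : E} (hv : ‖v‖ = 1) {p q : ℝ × ℝ} (hp : 0 ≤ p.1 + p.2) :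
    closedBall (((p.2 - p.1) / 2) • v) ((p.1 + p.2) / 2) ⊆
        closedBall (((q.2 - q.1) / 2) • v) ((q.1 + q.2) / 2) ↔ p ≤ q := by
  have : Nontrivial E := nontrivial_of_ne v 0 (norm_ne_zero_iff.1 (by simp [hv]))
  rw [closedBall_subset_closedBall_iff (by linarith), dist_eq_norm, ← sub_smul, norm_smul, hv,
    mul_one, Real.norm_eq_abs, ← le_sub_iff_add_le', abs_sub_le_iff, Prod.le_def]
  constructor <;> rintro ⟨h₁, h₂⟩ <;> constructor <;> linarith

section Realizer

variable {ι : Type*} (r : ι → ι → Prop)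

/-- The two coordinates of `φ` form a 2-realizer of `r` on `s`, in the sense of order dimension. -/
def RealizesOn (s : Finset ι) (φ : ι → ℝ × ℝ) : Prop :=
  ∀ i ∈ s, ∀ j ∈ s, r i j ↔ φ i ≤ φ j

variable {r} {s t : Finset ι} {φ ψ : ι → ℝ × ℝ}

theorem realizesOn_flip_neg_iff : RealizesOn (flip r) s (-φ) ↔ RealizesOn r s φ := by
  simp only [RealizesOn, flip, Pi.neg_apply, neg_le_neg_iff]
  exact ⟨fun h i hi j hj => h j hj i hi, fun h i hi j hj => h j hj i hi⟩

theorem RealizesOn.add_const (h : RealizesOn r s φ) (c : ℝ × ℝ) :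
    RealizesOn r s (fun i => φ i + c) := by
  simpa only [RealizesOn, add_le_add_iff_right] using h

theorem RealizesOn.exists_pos (h : RealizesOn r s φ) :
    ∃ ψ, RealizesOn r s ψ ∧ ∀ i ∈ s, 0 < (ψ i).1 ∧ 0 < (ψ i).2 := by
  obtain ⟨M, hM⟩ := (s.image (-φ)).exists_le
  refine ⟨fun i => φ i + (M + (1, 1)), h.add_const _, fun i hi => ?_⟩
  have := Prod.le_def.1 (hM _ (mem_image_of_mem _ hi))
  simp only [Pi.neg_apply, Prod.fst_neg, Prod.snd_neg] at this
  simp only [Prod.fst_add, Prod.snd_add]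
  constructor <;> linarith

theorem RealizesOn.exists_insert_top [DecidableEq ι] (h : RealizesOn r s φ) {t : ι} (htt : r t t)
    (htop : ∀ i ∈ s, r i t ∧ ¬ r t i) : ∃ ψ, RealizesOn r (insert t s) ψ := by
  obtain ⟨M, hM⟩ := (s.image φ).exists_le
  have hne : ∀ i ∈ s, i ≠ t := fun i hi hit => (htop i hi).2 (hit ▸ htt)
  have hlt : ∀ i ∈ s, φ i ≤ M + (1, 1) ∧ ¬ M + (1, 1) ≤ φ i := fun i hi => by
    have := Prod.le_def.1 (hM _ (mem_image_of_mem _ hi))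
    simp only [Prod.le_def, Prod.fst_add, Prod.snd_add]
    exact ⟨⟨by linarith, by linarith⟩, fun h' => by linarith [h'.1]⟩
  refine ⟨update φ t (M + (1, 1)), ?_⟩
  simp only [RealizesOn, forall_mem_insert, update_self]
  refine ⟨⟨iff_of_true htt le_rfl, fun j hj => ?_⟩, fun i hi => ⟨?_, fun j hj => ?_⟩⟩
  · rw [update_of_ne (hne j hj)]
    exact iff_of_false (htop j hj).2 (hlt j hj).2
  · rw [update_of_ne (hne i hi)]
    exact iff_of_true (htop i hi).1 (hlt i hi).1
  · rw [update_of_ne (hne i hi), update_of_ne (hne j hj)]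
    exact h i hi j hj

theorem RealizesOn.exists_insert_bot [DecidableEq ι] (h : RealizesOn r s φ) {b : ι} (hbb : r b b)
    (hbot : ∀ i ∈ s, r b i ∧ ¬ r i b) : ∃ ψ, RealizesOn r (insert b s) ψ := by
  obtain ⟨ψ, hψ⟩ := (realizesOn_flip_neg_iff.2 h).exists_insert_top hbb hbot
  exact ⟨-ψ, realizesOn_flip_neg_iff.1 (by rwa [neg_neg])⟩

theorem RealizesOn.exists_union [DecidableEq ι] (hφ : RealizesOn r s φ) (hψ : RealizesOn r t ψ)
    (hst : ∀ i ∈ s, ∀ j ∈ t, ¬ r i j ∧ ¬ r j i) : ∃ χ, RealizesOn r (s ∪ t) χ := by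
  obtain ⟨M, hM⟩ :=
    ((s ×ˢ t).image fun p : ι × ι => ((φ p.1).1 - (ψ p.2).1, (ψ p.2).2 - (φ p.1).2)).exists_le
  set c : ℝ × ℝ := (M.1 + 1, -(M.2 + 1))
  have hsep : ∀ i ∈ s, ∀ j ∈ t, ¬ φ i ≤ ψ j + c ∧ ¬ ψ j + c ≤ φ i := fun i hi j hj => by
    have := Prod.le_def.1 (hM _ (mem_image_of_mem _ (mem_product.2 ⟨hi, hj⟩ : (i, j) ∈ s ×ˢ t)))
    simp only [Prod.le_def, Prod.fst_add, Prod.snd_add, c]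
    constructor <;> rintro ⟨h₁, h₂⟩ <;> dsimp only at this <;> linarith
  refine ⟨fun i => if i ∈ s then φ i else ψ i + c, fun i hi j hj => ?_⟩
  rw [mem_union] at hi hj
  by_cases his : i ∈ s <;> by_cases hjs : j ∈ s <;> simp only [his, hjs, if_true, if_false]
  · exact hφ i his j hjs
  · have hjt := hj.resolve_left hjs
    exact iff_of_false (hst i his j hjt).1 (hsep i his j hjt).1
  · have hit := hi.resolve_left his
    exact iff_of_false (hst j hjs i hit).2 (hsep j hjs i hit).2
  · exact hψ.add_const c i (hi.resolve_left his) j (hj.resolve_left hjs)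

end Realizer

section Laminar

variable {ι α : Type*} {S : ι → Set α}

def IsLaminar (S : ι → Set α) : Prop :=
  ∀ i j, S i ⊆ S j ∨ S j ⊆ S i ∨ S i ∩ S j = ∅

theorem IsLaminar.incomparable_of_maximalFor (hlam : IsLaminar S) {s : Finset ι} {m i j : ι}
    (hm : MaximalFor (· ∈ s) S m) (hi : (S i).Nonempty) (him : S i ⊆ S m) (hj : j ∈ s)
    (hjm : ¬ S j ⊆ S m) : ¬ S i ⊆ S j ∧ ¬ S j ⊆ S i := by
  have hdisj : S m ∩ S j = ∅ := by
    rcases hlam m j with h | h | h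
    · exact absurd (hm.2 hj h) hjm
    · exact absurd h hjm
    · exact h
  refine ⟨fun hij => hi.ne_empty ?_, fun hji => hjm (hji.trans him)⟩
  exact Set.subset_empty_iff.1 (hdisj ▸ Set.subset_inter him hij)

theorem IsLaminar.exists_realizesOn (hinj : Injective S) (hlam : IsLaminar S) (s : Finset ι) :
    ∃ φ, RealizesOn (fun i j => S i ⊆ S j) s φ := by
  classical
  have not_subset_of_ne : ∀ {i j}, i ≠ j → S i ⊆ S j → ¬ S j ⊆ S i :=
    fun hij h h' => hij (hinj (h.antisymm h'))
  induction s using Finset.strongInduction with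
  | H s ih =>
    rcases s.eq_empty_or_nonempty with rfl | hs
    · exact ⟨0, by simp [RealizesOn]⟩
    by_cases hbot : ∃ b ∈ s, S b = ∅
    · obtain ⟨b, hb, hSb⟩ := hbot
      obtain ⟨φ, hφ⟩ := ih _ (erase_ssubset hb)
      have hbi : ∀ i, S b ⊆ S i := fun i => hSb ▸ Set.empty_subset _
      rw [← insert_erase hb]
      exact hφ.exists_insert_bot subset_rfl fun i hi =>
        ⟨hbi i, not_subset_of_ne (ne_of_mem_erase hi).symm (hbi i)⟩
    by_cases htop : ∃ t ∈ s, ∀ i ∈ s, S i ⊆ S t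
    · obtain ⟨t, ht, htop⟩ := htop
      obtain ⟨φ, hφ⟩ := ih _ (erase_ssubset ht)
      rw [← insert_erase ht]
      refine hφ.exists_insert_top subset_rfl fun i hi => ?_
      have hit := htop i (mem_of_mem_erase hi)
      exact ⟨hit, not_subset_of_ne (ne_of_mem_erase hi) hit⟩
    push Not at hbot htop
    obtain ⟨m, hm⟩ := s.exists_maximalFor S hs
    obtain ⟨j, hj, hjm⟩ := htop m hm.1
    obtain ⟨φ, hφ⟩ := ih _ (filter_ssubset.2 ⟨j, hj, hjm⟩ : s.filter (S · ⊆ S m) ⊂ s)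
    obtain ⟨ψ, hψ⟩ := ih _ (filter_ssubset.2 ⟨m, hm.1, not_not.2 subset_rfl⟩ :
      s.filter (¬ S · ⊆ S m) ⊂ s)
    rw [← filter_union_filter_not_eq (S · ⊆ S m) s]
    refine hφ.exists_union hψ fun i hi j hj => ?_
    rw [mem_filter] at hi hj
    exact hlam.incomparable_of_maximalFor hm (hbot i hi.1) hi.2 hj.1 hj.2

end Laminar

/-- The containment order of a finite injective laminar family of sets (any two
members are nested or disjoint) can be realized by closed discs in the plane:
`S i ⊆ S j` holds exactly when the disc assigned to `i` is contained in the
disc assigned to `j`. -/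
theorem laminar_family_circle_containment
    {ι α : Type*} [Fintype ι] (S : ι → Set α)
    (hinj : Function.Injective S)
    (hlam : ∀ i j, S i ⊆ S j ∨ S j ⊆ S i ∨ S i ∩ S j = ∅) :
    ∃ (c : ι → EuclideanSpace ℝ (Fin 2)) (r : ι → ℝ),
      (∀ i, 0 < r i) ∧
      ∀ i j, S i ⊆ S j ↔ Metric.closedBall (c i) (r i) ⊆ Metric.closedBall (c j) (r j) := by
  obtain ⟨φ₀, hφ₀⟩ := IsLaminar.exists_realizesOn hinj hlam univ
  obtain ⟨φ, hφ, hpos⟩ := hφ₀.exists_pos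
  have hpos' (i : ι) : 0 < (φ i).1 + (φ i).2 := by
    linarith [hpos i (mem_univ i)]
  have hv : ‖EuclideanSpace.single (0 : Fin 2) (1 : ℝ)‖ = 1 := by simp
  refine ⟨fun i => (((φ i).2 - (φ i).1) / 2) • EuclideanSpace.single 0 1,
    fun i => ((φ i).1 + (φ i).2) / 2, fun i => half_pos (hpos' i), fun i j => ?_⟩
  exact (hφ i (mem_univ i) j (mem_univ j)).trans
    (closedBall_smul_subset_closedBall_smul_iff hv (hpos' i).le).symm
end
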